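/- For every positive integer c there exists a constant C > 0, depending only on C1, C2, s0, ε0, r, q, m and c, such that for every k ≥ k0 and every n with c·φ_k ≤ n < c·φ_{k+1}: C·m^{−k(s0+r)} ≤ (1/n)·e_{n,r}(μ)^r ≤ C^{−1}·m^{−k(s0+r)}. -/

import Mathlib

/-! At scale `ρ = m^{-k}` a maximal `ρ`-packing of `K` is a `2ρ`-covering, so the Ahlfors–David
bounds give `C1 ρ^{s0} φ_k ≤ 1 ≤ C2 (2ρ)^{s0} φ_k`. Using the packing centres as a codebook gives
`e_{n,r}^r ≤ (2ρ)^r` as soon as `n ≥ φ_k`, which is the upper bound. Conversely `n < c φ_{k+1}`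
forces `n ρ^{s0} ≤ c m^{s0} / C1`, so for a fixed small `δ` any `n` balls of radius `δρ` carry at
most half of the mass; off them the distance to an `n`-point codebook is at least `δρ`, whence
`e_{n,r}^r ≥ (δρ)^r / 2`. -/

open MeasureTheory Metric Set

noncomputable section

variable {E : Type*} [NormedAddCommGroup E] [NormedSpace ℝ E]
  [MeasurableSpace E] [BorelSpace E]

/-- The (topological) support of a Borel measure: the set of points all of whose
neighborhoods have positive measure. -/
def msupp (μ : Measure E) : Set E := {x | ∀ ε : ℝ, 0 < ε → 0 < μ (ball x ε)}

/-- The set of achievable quantization integrals `∫ d(x,α)^r dν` over sets `α` with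
`1 ≤ card α ≤ n`. -/
def quantSet (ν : Measure E) (r : ℝ) (n : ℕ) : Set ℝ :=
  {I | ∃ α : Finset E, α.Nonempty ∧ α.card ≤ n ∧ I = ∫ x, infDist x (α : Set E) ^ r ∂ν}

/-- The `n`-th quantization error of order `r`, raised to the power `r`:
`e_{n,r}(ν)^r = inf { ∫ d(x,α)^r dν : 1 ≤ card α ≤ n }`. -/
def quantErrPow (ν : Measure E) (r : ℝ) (n : ℕ) : ℝ := sInf (quantSet ν r n)

/-- `α` is an `n`-optimal set for `ν` of order `r`. -/
def IsOptimalSet (ν : Measure E) (r : ℝ) (n : ℕ) (α : Finset E) : Prop :=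
  α.Nonempty ∧ α.card ≤ n ∧ (∫ x, infDist x (α : Set E) ^ r ∂ν) = quantErrPow ν r n

/-- `P` is a Voronoi partition (into Borel sets) with respect to the finite set `α`. -/
def IsVoronoiPartition (α : Finset E) (P : E → Set E) : Prop :=
  (∀ a ∈ α, MeasurableSet (P a)) ∧
  ((⋃ a ∈ α, P a) = univ) ∧
  (∀ a ∈ α, ∀ b ∈ α, a ≠ b → Disjoint (P a) (P b)) ∧
  (∀ a ∈ α, {x | dist x a < infDist x ((α : Set E) \ {a})} ⊆ P a) ∧
  (∀ a ∈ α, P a ⊆ {x | dist x a = infDist x (α : Set E)})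

/-- `I_a(α,ν) = ∫_{P_a(α)} d(x,α)^r dν`. -/
def voronoiI (ν : Measure E) (r : ℝ) (α : Finset E) (P : E → Set E) (a : E) : ℝ :=
  ∫ x in P a, infDist x (α : Set E) ^ r ∂ν

/-- `μ` is `s0`-dimensional Ahlfors–David regular with constants `ε0, C1, C2`, together
with the global upper bound (valid for all centers and radii). -/
def IsAhlfors (μ : Measure E) (s0 ε0 C1 C2 : ℝ) : Prop :=
  0 < s0 ∧ 0 < ε0 ∧ 0 < C1 ∧ 0 < C2 ∧
  (∀ x ∈ msupp μ, ∀ ε : ℝ, 0 < ε → ε < ε0 →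
    ENNReal.ofReal (C1 * ε ^ s0) ≤ μ (closedBall x ε) ∧
    μ (closedBall x ε) ≤ ENNReal.ofReal (C2 * ε ^ s0)) ∧
  (∀ x : E, ∀ ε : ℝ, 0 < ε → μ (closedBall x ε) ≤ ENNReal.ofReal (C2 * ε ^ s0))

/-- `h` is a similitude of ratio `ρ`. -/
def IsSimilitude (h : E → E) (ρ : ℝ) : Prop :=
  Function.Surjective h ∧ ∀ x y, dist (h x) (h y) = ρ * dist x y

/-- The measure `λ_B = μ(·|B) ∘ h`, i.e. `λ_B(A) = μ(h(A) ∩ B)/μ(B)`. -/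
def condPull (μ : Measure E) (B : Set E) (h : E → E) : Measure E :=
  Measure.comap h (ProbabilityTheory.cond μ B)

/-- There exist `j` pairwise disjoint closed balls of radius `ρ` centered in `K`. -/
def PackingNum (K : Set E) (ρ : ℝ) (j : ℕ) : Prop :=
  ∃ c : Fin j → E, (∀ i, c i ∈ K) ∧
    Pairwise fun i i' => Disjoint (closedBall (c i) ρ) (closedBall (c i') ρ)

end

theorem measure_biUnion_le_ofReal_card_mul {α ι : Type*} [MeasurableSpace α] (μ : Measure α)
    (s : Finset ι) (t : ι → Set α) {b : ℝ} (h : ∀ i ∈ s, μ (t i) ≤ ENNReal.ofReal b) :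
    μ (⋃ i ∈ s, t i) ≤ ENNReal.ofReal (s.card * b) :=
  calc μ (⋃ i ∈ s, t i) ≤ ∑ i ∈ s, μ (t i) := measure_biUnion_finset_le _ _
    _ ≤ s.card • ENNReal.ofReal b := Finset.sum_le_card_nsmul _ _ _ h
    _ = ENNReal.ofReal (s.card * b) := by
      rw [nsmul_eq_mul, ENNReal.ofReal_mul (Nat.cast_nonneg _), ENNReal.ofReal_natCast]

section Packing

variable {E : Type*} [NormedAddCommGroup E]

theorem PackingNum.exists_cover_of_isGreatest {K : Set E} {ρ : ℝ} {N : ℕ}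
    (hN : IsGreatest {j | PackingNum K ρ j} N) :
    ∃ cs : Fin N → E, (∀ i, cs i ∈ K) ∧ ∀ x ∈ K, ∃ i, dist x (cs i) ≤ 2 * ρ := by
  obtain ⟨⟨cs, hcK, hdisj⟩, hmax⟩ := hN
  refine ⟨cs, hcK, fun x hx => ?_⟩
  by_contra! hfar
  have hx_disj : ∀ i, Disjoint (closedBall x ρ) (closedBall (cs i) ρ) := fun i =>
    closedBall_disjoint_closedBall (by linarith [hfar i])
  have hpack : PackingNum K ρ (N + 1) := by
    refine ⟨Fin.snoc cs x, Fin.lastCases (by simpa using hx) (by simpa using hcK), ?_⟩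
    intro i j hij
    induction i using Fin.lastCases <;> induction j using Fin.lastCases
    · exact absurd rfl hij
    · simpa using hx_disj _
    · simpa using (hx_disj _).symm
    · simpa using hdisj fun h => hij (congrArg Fin.castSucc h)
  exact absurd (hmax hpack) (by omega)

theorem PackingNum.isBounded_of_isGreatest {K : Set E} {ρ : ℝ} {N : ℕ}
    (hN : IsGreatest {j | PackingNum K ρ j} N) : Bornology.IsBounded K := by
  obtain ⟨cs, -, hcov⟩ := PackingNum.exists_cover_of_isGreatest hN
  refine (Bornology.isBounded_iUnion.mpr fun i => isBounded_closedBall (x := cs i)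
    (r := 2 * ρ)).subset fun x hx => ?_
  obtain ⟨i, hi⟩ := hcov x hx
  exact mem_iUnion.mpr ⟨i, hi⟩

variable [MeasurableSpace E]

theorem measure_msupp_compl [SecondCountableTopology E] (μ : Measure E) : μ (msupp μ)ᶜ = 0 := by
  refine measure_null_of_locally_null _ fun x hx => ?_
  simp only [msupp, mem_compl_iff, mem_ofPred_eq, not_forall, not_lt, nonpos_iff_eq_zero] at hx
  obtain ⟨ε, hε, hzero⟩ := hx
  exact ⟨ball x ε, mem_nhdsWithin_of_mem_nhds (ball_mem_nhds x hε), hzero⟩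

theorem ae_mem_msupp [SecondCountableTopology E] (μ : Measure E) : ∀ᵐ x ∂μ, x ∈ msupp μ :=
  measure_msupp_compl μ

theorem PackingNum.natCast_mul_le_one [OpensMeasurableSpace E] {μ : Measure E}
    [IsProbabilityMeasure μ] {K : Set E} {ρ b : ℝ} {N : ℕ} (hP : PackingNum K ρ N)
    (hb : ∀ x ∈ K, ENNReal.ofReal b ≤ μ (closedBall x ρ)) : (N : ℝ) * b ≤ 1 := by
  obtain ⟨cs, hcK, hdisj⟩ := hP
  rw [← ENNReal.ofReal_le_one, ENNReal.ofReal_mul (Nat.cast_nonneg _), ENNReal.ofReal_natCast]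
  calc (N : ENNReal) * ENNReal.ofReal b = ∑ _i : Fin N, ENNReal.ofReal b := by simp
    _ ≤ ∑ i, μ (closedBall (cs i) ρ) := Finset.sum_le_sum fun i _ => hb _ (hcK i)
    _ = μ (⋃ i, closedBall (cs i) ρ) := by
      rw [measure_iUnion hdisj fun _ => measurableSet_closedBall, tsum_fintype]
    _ ≤ 1 := prob_le_one

theorem one_le_natCast_mul_of_cover {μ : Measure E} [IsProbabilityMeasure μ]
    {K : Set E} (hK : ∀ᵐ x ∂μ, x ∈ K) {R b : ℝ} {N : ℕ} (cs : Fin N → E)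
    (hcov : ∀ x ∈ K, ∃ i, dist x (cs i) ≤ R) (hb : ∀ x, μ (closedBall x R) ≤ ENNReal.ofReal b) :
    1 ≤ (N : ℝ) * b := by
  have hsub : ∀ᵐ x ∂μ, x ∈ ⋃ i ∈ Finset.univ, closedBall (cs i) R := by
    filter_upwards [hK] with x hx
    obtain ⟨i, hi⟩ := hcov x hx
    exact mem_biUnion (Finset.mem_coe.mpr (Finset.mem_univ i)) hi
  rw [← ENNReal.one_le_ofReal, ← Finset.card_fin N, ← measure_univ (μ := μ)]
  calc μ univ ≤ μ (⋃ i ∈ Finset.univ, closedBall (cs i) R) :=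
        measure_mono_ae (hsub.mono fun x hx _ => hx)
    _ ≤ _ := measure_biUnion_le_ofReal_card_mul μ _ _ fun i _ => hb (cs i)

end Packing

section Quantization

variable {E : Type*} [NormedAddCommGroup E] [MeasurableSpace E] {μ : Measure E} {r : ℝ}

theorem quantErrPow_le_integral {n : ℕ} {α : Finset E} (hα : α.Nonempty) (hαn : α.card ≤ n) :
    quantErrPow μ r n ≤ ∫ x, infDist x (α : Set E) ^ r ∂μ := by
  refine csInf_le ⟨0, ?_⟩ ⟨α, hα, hαn, rfl⟩
  rintro _ ⟨β, -, -, rfl⟩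
  exact integral_nonneg fun x => Real.rpow_nonneg infDist_nonneg r

theorem le_quantErrPow {n : ℕ} (hn : 0 < n) {a : ℝ}
    (h : ∀ α : Finset E, α.Nonempty → α.card ≤ n → a ≤ ∫ x, infDist x (α : Set E) ^ r ∂μ) :
    a ≤ quantErrPow μ r n := by
  refine le_csInf ⟨_, {0}, Finset.singleton_nonempty 0, (Finset.card_singleton 0).trans_le hn, rfl⟩
    ?_
  rintro _ ⟨α, hα, hαn, rfl⟩
  exact h α hα hαn

theorem integral_infDist_rpow_le [IsProbabilityMeasure μ] (hr : 0 ≤ r) {s : Set E} {b : ℝ}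
    (h : ∀ᵐ x ∂μ, infDist x s ≤ b) : ∫ x, infDist x s ^ r ∂μ ≤ b ^ r := by
  calc ∫ x, infDist x s ^ r ∂μ ≤ ∫ _, b ^ r ∂μ :=
        integral_mono_of_nonneg (ae_of_all _ fun x => Real.rpow_nonneg infDist_nonneg r)
          (integrable_const _) (h.mono fun x hx => Real.rpow_le_rpow infDist_nonneg hx hr)
    _ = b ^ r := by simp

theorem integrable_infDist_rpow [OpensMeasurableSpace E] [SecondCountableTopology E]
    [IsFiniteMeasure μ] (hK : Bornology.IsBounded (msupp μ)) (hr : 0 ≤ r) {s : Set E}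
    (hs : s.Nonempty) : Integrable (fun x => infDist x s ^ r) μ := by
  obtain ⟨a, ha⟩ := hs
  obtain ⟨R, hR⟩ := hK.subset_closedBall a
  refine Integrable.mono' (integrable_const (R ^ r))
    ((continuous_infDist_pt s).measurable.pow_const r).aestronglyMeasurable ?_
  filter_upwards [ae_mem_msupp μ] with x hx
  rw [Real.norm_of_nonneg (Real.rpow_nonneg infDist_nonneg r)]
  exact Real.rpow_le_rpow infDist_nonneg ((infDist_le_dist_of_mem ha).trans (hR hx)) hr

theorem le_quantErrPow_of_measure_closedBall_le [OpensMeasurableSpace E]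
    [SecondCountableTopology E] [IsProbabilityMeasure μ] (hK : Bornology.IsBounded (msupp μ))
    (hr : 0 ≤ r) {t : ℝ} (ht : 0 ≤ t) {n : ℕ} (hn : 0 < n)
    (hb : ∀ x, μ (closedBall x t) ≤ ENNReal.ofReal (1 / (2 * n))) :
    t ^ r / 2 ≤ quantErrPow μ r n := by
  refine le_quantErrPow hn fun α hα hαn => ?_
  set U := ⋃ a ∈ α, closedBall a t
  set S := {x | t ≤ infDist x (α : Set E)}
  have hU : μ.real U ≤ 1 / 2 := by
    refine ENNReal.toReal_le_of_le_ofReal (by norm_num)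
      ((measure_biUnion_le_ofReal_card_mul μ α _ fun a _ => hb a).trans
        (ENNReal.ofReal_le_ofReal ?_))
    have hn' : (0 : ℝ) < n := by exact_mod_cast hn
    calc (α.card : ℝ) * (1 / (2 * n)) ≤ n * (1 / (2 * n)) := by gcongr
      _ = 1 / 2 := by field_simp
  have hSU : Sᶜ ⊆ U := fun x hx => by
    obtain ⟨a, ha, hxa⟩ := (infDist_lt_iff (Finset.coe_nonempty.mpr hα)).mp (not_le.mp hx)
    exact mem_biUnion ha hxa.le
  have hS : 1 / 2 ≤ μ.real S := by
    have hSmeas : MeasurableSet S :=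
      measurableSet_le measurable_const (continuous_infDist_pt _).measurable
    linarith [probReal_compl_eq_one_sub (μ := μ) hSmeas,
      measureReal_mono hSU (measure_ne_top μ U)]
  calc t ^ r / 2 ≤ t ^ r * μ.real S := by
        rw [div_eq_mul_one_div]; exact mul_le_mul_of_nonneg_left hS (Real.rpow_nonneg ht r)
    _ ≤ t ^ r * μ.real {x | t ^ r ≤ infDist x (α : Set E) ^ r} :=
        mul_le_mul_of_nonneg_left (measureReal_mono fun x hx => Real.rpow_le_rpow ht hx hr)
          (Real.rpow_nonneg ht r)
    _ ≤ ∫ x, infDist x (α : Set E) ^ r ∂μ :=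
        mul_meas_ge_le_integral_of_nonneg (ae_of_all _ fun x => Real.rpow_nonneg infDist_nonneg r)
          (integrable_infDist_rpow hK hr (Finset.coe_nonempty.mpr hα)) _

end Quantization

namespace IsAhlfors

variable {E : Type*} [NormedAddCommGroup E] [MeasurableSpace E] {μ : Measure E}
  [IsProbabilityMeasure μ] {s0 ε0 C1 C2 ρ : ℝ}

theorem natCast_mul_rpow_le [OpensMeasurableSpace E] (hμ : IsAhlfors μ s0 ε0 C1 C2)
    (hρ : 0 < ρ) (hρε : ρ < ε0) {N : ℕ} (hN : PackingNum (msupp μ) ρ N) :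
    (N : ℝ) * ρ ^ s0 ≤ C1⁻¹ := by
  obtain ⟨-, -, hC1, -, hlocal, -⟩ := hμ
  have h := hN.natCast_mul_le_one fun x hx => (hlocal x hx ρ hρ hρε).1
  calc (N : ℝ) * ρ ^ s0 = C1⁻¹ * (N * (C1 * ρ ^ s0)) := by field_simp
    _ ≤ C1⁻¹ * 1 := by gcongr
    _ = C1⁻¹ := mul_one _

theorem natCast_mul_rpow_le_of_lt_mul [OpensMeasurableSpace E] (hμ : IsAhlfors μ s0 ε0 C1 C2)
    (hρ : 0 < ρ) (hρε : ρ < ε0) {N n c : ℕ} (hN : PackingNum (msupp μ) ρ N) (hn : n < c * N)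
    {l : ℝ} (hl : 0 < l) : n * (l * ρ) ^ s0 ≤ c * l ^ s0 / C1 :=
  calc n * (l * ρ) ^ s0 ≤ (c * N) * (l * ρ) ^ s0 := by gcongr; exact_mod_cast hn.le
    _ = c * l ^ s0 * (N * ρ ^ s0) := by rw [Real.mul_rpow hl.le hρ.le]; ring
    _ ≤ c * l ^ s0 * C1⁻¹ := by gcongr; exact hμ.natCast_mul_rpow_le hρ hρε hN
    _ = c * l ^ s0 / C1 := by ring

variable [SecondCountableTopology E]

theorem one_le_natCast_mul (hμ : IsAhlfors μ s0 ε0 C1 C2) (hρ : 0 < ρ) {N : ℕ}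
    (hN : IsGreatest {j | PackingNum (msupp μ) ρ j} N) :
    1 ≤ (N : ℝ) * (C2 * (2 * ρ) ^ s0) := by
  obtain ⟨-, -, -, -, -, hglobal⟩ := hμ
  obtain ⟨cs, -, hcov⟩ := PackingNum.exists_cover_of_isGreatest hN
  exact one_le_natCast_mul_of_cover (ae_mem_msupp μ) cs hcov fun x => hglobal x _ (by positivity)

theorem pos_of_isGreatest_packingNum (hμ : IsAhlfors μ s0 ε0 C1 C2) (hρ : 0 < ρ) {N : ℕ}
    (hN : IsGreatest {j | PackingNum (msupp μ) ρ j} N) : 0 < N := by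
  have hcount := hμ.one_le_natCast_mul hρ hN
  exact Nat.pos_of_ne_zero fun h => by norm_num [h] at hcount

theorem one_div_mul_quantErrPow_le [OpensMeasurableSpace E] (hμ : IsAhlfors μ s0 ε0 C1 C2)
    {r : ℝ} (hr : 0 ≤ r) (hρ : 0 < ρ) {N n : ℕ}
    (hN : IsGreatest {j | PackingNum (msupp μ) ρ j} N) (hNn : N ≤ n) :
    1 / (n : ℝ) * quantErrPow μ r n ≤ C2 * (2 * ρ) ^ (s0 + r) := by
  classical
  have hcount := hμ.one_le_natCast_mul hρ hN
  have hN0 := hμ.pos_of_isGreatest_packingNum hρ hN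
  have hn : (0 : ℝ) < n := by exact_mod_cast hN0.trans_le hNn
  obtain ⟨cs, -, hcov⟩ := PackingNum.exists_cover_of_isGreatest hN
  have hcodebook : quantErrPow μ r n ≤ (2 * ρ) ^ r := by
    refine (quantErrPow_le_integral (Finset.univ_nonempty_iff.mpr ⟨⟨0, hN0⟩⟩ |>.image cs)
      (Finset.card_image_le.trans (by simpa using hNn))).trans
      (integral_infDist_rpow_le hr ?_)
    filter_upwards [ae_mem_msupp μ] with x hx
    obtain ⟨i, hi⟩ := hcov x hx
    exact (infDist_le_dist_of_mem (by simp)).trans hi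
  have hinv : 1 / (n : ℝ) ≤ C2 * (2 * ρ) ^ s0 := by
    rw [div_le_iff₀ hn]
    have hC2 := hμ.2.2.2.1
    exact hcount.trans (by rw [mul_comm]; gcongr)
  calc 1 / (n : ℝ) * quantErrPow μ r n ≤ 1 / n * (2 * ρ) ^ r := by gcongr
    _ ≤ C2 * (2 * ρ) ^ s0 * (2 * ρ) ^ r := by gcongr
    _ = C2 * (2 * ρ) ^ (s0 + r) := by rw [Real.rpow_add (by positivity), mul_assoc]

theorem exists_mul_rpow_le_one_div_mul_quantErrPow [OpensMeasurableSpace E]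
    (hμ : IsAhlfors μ s0 ε0 C1 C2)
    (hK : Bornology.IsBounded (msupp μ)) {r : ℝ} (hr : 0 ≤ r) {A : ℝ} (hA : 0 < A) :
    ∃ C > 0, ∀ (n : ℕ) (ρ : ℝ), 0 < n → 0 < ρ → n * ρ ^ s0 ≤ A →
      C * ρ ^ (s0 + r) ≤ 1 / (n : ℝ) * quantErrPow μ r n := by
  obtain ⟨hs0, -, -, hC2, -, hglobal⟩ := hμ
  set δ := (2 * A * C2)⁻¹ ^ s0⁻¹
  have hδ : 0 < δ := by positivity
  have hδs0 : δ ^ s0 = (2 * A * C2)⁻¹ := Real.rpow_inv_rpow (by positivity) hs0.ne'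
  refine ⟨δ ^ r / (2 * A), by positivity, fun n ρ hn hρ hnρ => ?_⟩
  have hn' : (0 : ℝ) < n := by exact_mod_cast hn
  have hball : ∀ x, μ (closedBall x (δ * ρ)) ≤ ENNReal.ofReal (1 / (2 * n)) := fun x =>
    (hglobal x _ (by positivity)).trans <| ENNReal.ofReal_le_ofReal <| by
      rw [Real.mul_rpow hδ.le hρ.le, hδs0, le_div_iff₀ (by positivity)]
      calc C2 * ((2 * A * C2)⁻¹ * ρ ^ s0) * (2 * n) = n * ρ ^ s0 / A := by field_simp
        _ ≤ 1 := (div_le_one hA).mpr hnρ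
  have hlower := le_quantErrPow_of_measure_closedBall_le hK hr (by positivity) hn hball
  rw [Real.mul_rpow hδ.le hρ.le] at hlower
  calc δ ^ r / (2 * A) * ρ ^ (s0 + r) = 1 / n * (δ ^ r * ρ ^ r / 2) * (n * ρ ^ s0 / A) := by
        rw [Real.rpow_add hρ]; field_simp
    _ ≤ 1 / n * (δ ^ r * ρ ^ r / 2) * 1 := by gcongr; exact (div_le_one hA).mpr hnρ
    _ ≤ 1 / n * quantErrPow μ r n := by rw [mul_one]; gcongr

end IsAhlfors

theorem stmt19_general {E : Type*} [NormedAddCommGroup E] [NormedSpace ℝ E]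
    [MeasurableSpace E] [BorelSpace E] [FiniteDimensional ℝ E]
    (r : ℝ) (hr : 0 < r)
    (μ : MeasureTheory.Measure E) [MeasureTheory.IsProbabilityMeasure μ]
    (s0 ε0 C1 C2 : ℝ) (hμ : IsAhlfors μ s0 ε0 C1 C2)
    (m : ℕ) (hm : 2 ≤ m) (k0 : ℕ)
    (hk0 : 2 * ((m : ℝ) ^ k0)⁻¹ < ε0)
    (φ : ℕ → ℕ)
    (hφ : ∀ k, k0 ≤ k →
      IsGreatest {j | PackingNum (msupp μ) (((m : ℝ) ^ k)⁻¹) j} (φ k)) :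
    ∀ c : ℕ, 0 < c → ∃ C : ℝ, 0 < C ∧
      ∀ k, k0 ≤ k → ∀ n : ℕ, c * φ k ≤ n → n < c * φ (k + 1) →
        C * (((m : ℝ) ^ k)⁻¹) ^ (s0 + r) ≤ (1 / (n : ℝ)) * quantErrPow μ r n ∧
        (1 / (n : ℝ)) * quantErrPow μ r n ≤ C⁻¹ * (((m : ℝ) ^ k)⁻¹) ^ (s0 + r) := by
  intro c hc
  have hscale : ∀ k, k0 ≤ k → ((m : ℝ) ^ k)⁻¹ < ε0 := fun k hk =>
    calc ((m : ℝ) ^ k)⁻¹ ≤ ((m : ℝ) ^ k0)⁻¹ := by gcongr; exact_mod_cast (by omega : 1 ≤ m)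
      _ < 2 * ((m : ℝ) ^ k0)⁻¹ := by linarith [show (0 : ℝ) < ((m : ℝ) ^ k0)⁻¹ by positivity]
      _ < ε0 := hk0
  have hC1 := hμ.2.2.1
  have hC2 := hμ.2.2.2.1
  obtain ⟨Cl, hCl, hlower⟩ := hμ.exists_mul_rpow_le_one_div_mul_quantErrPow
    (PackingNum.isBounded_of_isGreatest (hφ k0 le_rfl)) hr.le (A := c * m ^ s0 / C1)
    (by positivity)
  refine ⟨min Cl (C2 * 2 ^ (s0 + r))⁻¹, by positivity, fun k hk n hn1 hn2 => ?_⟩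
  set ρ := ((m : ℝ) ^ k)⁻¹
  have hρ : 0 < ρ := by positivity
  have hφn : φ k ≤ n := (Nat.le_mul_of_pos_left _ hc).trans hn1
  constructor
  · have hnρ : n * ρ ^ s0 ≤ c * m ^ s0 / C1 := by
      have hρ_succ : (m : ℝ) * ((m : ℝ) ^ (k + 1))⁻¹ = ρ := by
        rw [pow_succ, mul_inv_rev, mul_inv_cancel_left₀ (by positivity)]
      simpa only [hρ_succ] using hμ.natCast_mul_rpow_le_of_lt_mul (by positivity)
        (hscale (k + 1) (by omega)) (hφ (k + 1) (by omega)).1 hn2 (l := m) (by positivity)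
    exact (mul_le_mul_of_nonneg_right (min_le_left _ _) (by positivity)).trans
      (hlower n ρ ((hμ.pos_of_isGreatest_packingNum hρ (hφ k hk)).trans_le hφn) hρ hnρ)
  · calc 1 / (n : ℝ) * quantErrPow μ r n ≤ C2 * (2 * ρ) ^ (s0 + r) :=
          hμ.one_div_mul_quantErrPow_le hr.le hρ (hφ k hk) hφn
      _ = (C2 * 2 ^ (s0 + r)) * ρ ^ (s0 + r) := by rw [Real.mul_rpow (by norm_num) hρ.le]; ring
      _ ≤ (min Cl (C2 * 2 ^ (s0 + r))⁻¹)⁻¹ * ρ ^ (s0 + r) := by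
          gcongr
          exact le_inv_of_le_inv₀ (by positivity) (min_le_right _ _)

/-- For every positive integer `c` there is `C > 0` such that for every
`k ≥ k0` and every `n` with `c·φ_k ≤ n < c·φ_{k+1}`:
`C·m^{−k(s0+r)} ≤ (1/n)·e_{n,r}(μ)^r ≤ C⁻¹·m^{−k(s0+r)}`. -/
theorem stmt19 {E : Type*} [NormedAddCommGroup E] [NormedSpace ℝ E]
    [MeasurableSpace E] [BorelSpace E] [FiniteDimensional ℝ E]
    (r : ℝ) (hr : 0 < r)
    (μ : MeasureTheory.Measure E) [MeasureTheory.IsProbabilityMeasure μ]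
    (s0 ε0 C1 C2 : ℝ) (hμ : IsAhlfors μ s0 ε0 C1 C2)
    (m : ℕ) (hm : 2 ≤ m) (k0 : ℕ)
    (hk0 : 2 * ((m : ℝ) ^ k0)⁻¹ < ε0)
    (hk0min : ∀ j : ℕ, 2 * ((m : ℝ) ^ j)⁻¹ < ε0 → k0 ≤ j)
    (φ : ℕ → ℕ)
    (hφ : ∀ k, k0 ≤ k →
      IsGreatest {j | PackingNum (msupp μ) (((m : ℝ) ^ k)⁻¹) j} (φ k)) :
    ∀ c : ℕ, 0 < c → ∃ C : ℝ, 0 < C ∧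
      ∀ k, k0 ≤ k → ∀ n : ℕ, c * φ k ≤ n → n < c * φ (k + 1) →
        C * (((m : ℝ) ^ k)⁻¹) ^ (s0 + r) ≤ (1 / (n : ℝ)) * quantErrPow μ r n ∧
        (1 / (n : ℝ)) * quantErrPow μ r n ≤ C⁻¹ * (((m : ℝ) ^ k)⁻¹) ^ (s0 + r) :=
  stmt19_general r hr μ s0 ε0 C1 C2 hμ m hm k0 hk0 φ hφ
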